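/- Let X be the infinitesimal generator of positive unit-speed translations along an oriented geodesic l in ℍ² = P(Id) ⊂ X_{-1}. Then the one-parameter family (exp(-tX), exp(tX)) ∈ PSL(2,ℝ) × PSL(2,ℝ), t > 0, consists of rotations around l, and the angle between the plane P(Id) and its image under (exp(-tX), exp(tX)) equals the translation length 2t of exp(tX). -/

import Mathlib

noncomputable section

open Matrix

/-- The bilinear form polarizing `-det`, inducing the anti-de Sitter metric on the
quadric `{det = 1}`; `P(Id) = {z : det z = 1, bform z 1 = 0}` is the hyperbolic
plane dual to the identity. -/
def bform (A B : Matrix (Fin 2) (Fin 2) ℝ) : ℝ :=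
  -(((A + B).det - A.det - B.det) / 2)

/-- The inverse hyperbolic cosine. -/
def arcosh (x : ℝ) : ℝ := Real.log (x + Real.sqrt (x^2 - 1))

/-!
The pair `(exp(-tX), exp(tX))` acts by `z ↦ E z E` with `E = exp(-tX)`. A trace-free unit
`z` anticommuting with `X` satisfies `z (-tX) = (tX) z`, hence `z exp(-tX) = exp(tX) z`, so
`E z E = z`. Since `bform` polarizes the determinant, `bform (a A b) (a B b) =
det a · det b · bform A B`; as `E 1 E = exp(-2tX)`, the image of `P(Id)` is the plane dual
to `exp(-2tX)`. Finally `X² = 1` gives `exp(sX) = cosh s + sinh s · X`, so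
`-bform 1 (exp(-2tX)) = tr(exp(-2tX))/2 = cosh 2t`.
-/

open scoped Nat

lemma bform_eq_trace (A B : Matrix (Fin 2) (Fin 2) ℝ) :
    bform A B = (trace (A * B) - trace A * trace B) / 2 := by
  simp only [bform, det_fin_two, trace_fin_two, mul_apply, Fin.sum_univ_two, Matrix.add_apply]
  ring

lemma bform_one_left (B : Matrix (Fin 2) (Fin 2) ℝ) : bform 1 B = -(trace B / 2) := by
  rw [bform_eq_trace, one_mul, trace_one, Fintype.card_fin]
  ring

lemma bform_mul_mul (a b A B : Matrix (Fin 2) (Fin 2) ℝ) :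
    bform (a * A * b) (a * B * b) = a.det * b.det * bform A B := by
  simp only [bform, ← add_mul, ← mul_add, det_mul]
  ring

lemma Matrix.exp_neg_mul_mul_exp_of_semiconjBy {m : Type*} [Fintype m] [DecidableEq m]
    {A B C : Matrix m m ℝ} (h : SemiconjBy C A B) :
    NormedSpace.exp (-B) * C * NormedSpace.exp A = C :=
  open scoped Norms.Operator in h.exp_neg_mul_mul_exp_eq_self

lemma NormedSpace.exp_smul_of_mul_self_eq_one {𝔸 : Type*} [Ring 𝔸] [Algebra ℝ 𝔸]
    [TopologicalSpace 𝔸] [IsTopologicalRing 𝔸] [ContinuousSMul ℝ 𝔸] [T2Space 𝔸]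
    {x : 𝔸} (hx : x * x = 1) (s : ℝ) :
    NormedSpace.exp (s • x) = Real.cosh s • 1 + Real.sinh s • x := by
  have hx_even : ∀ k : ℕ, x ^ (2 * k) = 1 := fun k => by rw [pow_mul, sq, hx, one_pow]
  have h_even : HasSum (fun k : ℕ => ((2 * k)! : ℝ)⁻¹ • (s • x) ^ (2 * k))
      (Real.cosh s • 1) := by
    convert (Real.hasSum_cosh s).smul_const (1 : 𝔸) using 2 with k
    rw [smul_pow, hx_even, smul_smul, div_eq_inv_mul]
  have h_odd : HasSum (fun k : ℕ => ((2 * k + 1)! : ℝ)⁻¹ • (s • x) ^ (2 * k + 1))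
      (Real.sinh s • x) := by
    convert (Real.hasSum_sinh s).smul_const x using 2 with k
    rw [smul_pow, pow_succ x, hx_even, one_mul, smul_smul, div_eq_inv_mul]
  rw [NormedSpace.exp_eq_tsum ℝ]
  exact (HasSum.even_add_odd (f := fun n : ℕ => (n ! : ℝ)⁻¹ • (s • x) ^ n) h_even h_odd).tsum_eq

lemma trace_exp_smul_of_trace_eq_zero {X : Matrix (Fin 2) (Fin 2) ℝ} (htr : trace X = 0)
    (hX2 : X * X = 1) (s : ℝ) : trace (NormedSpace.exp (s • X)) = 2 * Real.cosh s := by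
  rw [NormedSpace.exp_smul_of_mul_self_eq_one hX2, trace_add, trace_smul, trace_smul, htr,
    trace_one, Fintype.card_fin, smul_eq_mul, smul_zero]
  push_cast
  ring

/-- Let `X` be the infinitesimal generator of positive unit-speed translations along an
oriented geodesic `l ⊂ P(Id)` (so `X` is traceless with `X² = 1`, and `exp(tX)` is
hyperbolic of translation length `2t`; the geodesic `l` consists of the trace-free unit
matrices anticommuting with `X`). Then for `t > 0` the pair `(exp(-tX), exp(tX))`,
acting by `z ↦ exp(-tX)·z·exp(tX)⁻¹ = exp(-tX)·z·exp(-tX)`, is a rotation around `l`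
(it fixes `l` pointwise), it maps the plane `P(Id)` to the plane dual to `exp(-2tX)`,
and the angle between `P(Id)` and its image — the distance along `l*` between their
dual points `1` and `exp(-2tX)` — equals the translation length `2t` of `exp(tX)`. -/
theorem rotation_angle_equals_translation_length
    (X : Matrix (Fin 2) (Fin 2) ℝ) (htr : Matrix.trace X = 0) (hX2 : X * X = 1)
    (t : ℝ) (ht : 0 < t) :
    -- `(exp(-tX), exp(tX))` fixes the geodesic `l` pointwise:
    (∀ z : Matrix (Fin 2) (Fin 2) ℝ, z.det = 1 → Matrix.trace z = 0 →
      z * X = -(X * z) →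
      NormedSpace.exp (-(t • X)) * z * NormedSpace.exp (-(t • X)) = z) ∧
    -- the image of the plane `P(Id)` is the plane dual to `exp(-2tX)`:
    (∀ z : Matrix (Fin 2) (Fin 2) ℝ, z.det = 1 → bform z 1 = 0 →
      bform (NormedSpace.exp (-(t • X)) * z * NormedSpace.exp (-(t • X)))
        (NormedSpace.exp ((-(2 * t)) • X)) = 0) ∧
    -- the angle between `P(Id)` and its image equals `2t`:
    -(bform 1 (NormedSpace.exp ((-(2 * t)) • X))) = Real.cosh (2 * t) ∧
    arcosh (-(bform 1 (NormedSpace.exp ((-(2 * t)) • X)))) = 2 * t := by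
  set E := NormedSpace.exp (-(t • X))
  have hE2 : NormedSpace.exp ((-(2 * t)) • X) = E * 1 * E := by
    rw [mul_one, ← Matrix.exp_add_of_commute _ _ (Commute.refl _)]
    congr 1
    module
  have hangle : -(bform 1 (NormedSpace.exp ((-(2 * t)) • X))) = Real.cosh (2 * t) := by
    rw [bform_one_left, trace_exp_smul_of_trace_eq_zero htr hX2, Real.cosh_neg]
    ring
  refine ⟨fun z _ _ hzX => ?_, fun z _ hz => ?_, hangle, ?_⟩
  · have hsemi : SemiconjBy z (-(t • X)) (t • X) := by
      rw [SemiconjBy, mul_neg, mul_smul_comm, hzX, smul_neg, neg_neg, smul_mul_assoc]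
    exact Matrix.exp_neg_mul_mul_exp_of_semiconjBy hsemi
  · rw [hE2, bform_mul_mul, hz, mul_zero]
  · rw [hangle]
    exact Real.arcosh_cosh (by positivity)
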